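/- A ℤ²-colored graph (G,γ) is a Ross graph if and only if, for any vertex u of G, the ℤ²-colored graph obtained from (G,γ) by adding three self-loops at u colored (1,0), (0,1) and (1,1) is a colored-Laman graph. -/

import Mathlib

/-!
Loops with nonzero colors at `u` change the Ross count `2n' - 3c'₀ - 2c'₁` of a subgraph only
through the component of `u`, which becomes nontrivial (a new one if `u` was not yet a vertex):
the count goes up by one if that component had trivial ρ-image and is unchanged otherwise.
The loops of a subgraph of the extended graph are paid for by the rank term `max {2k' - 1, 0}`
(one loop forces `k' ≥ 1`, two distinct loops force `k' = 2`), so Ross sparsity of `G` gives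
colored-Laman sparsity of the extended graph. Conversely, a subgraph of `G` is the vertex-disjoint
union of its components with trivial ρ-image, where `k' = 0` and the colored-Laman bound is the
Ross bound, and its components with nontrivial ρ-image, to which all three loops can be added
at a cost of `3 ≥ max {2k' - 1, 0}`. The edge counts match since `m + 3 = 2n + 1 ↔ m = 2n - 2`.
-/

open Matrix

noncomputable section

/-- A `Γ`-colored directed multigraph: vertex set `Fin n`, edge set `Fin m`,
each edge `e` directed from `tail e` to `head e` with color `color e`. -/
structure CGraph (Γ : Type) where
  n : ℕ
  m : ℕ
  tail : Fin m → Fin n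
  head : Fin m → Fin n
  color : Fin m → Γ

namespace CGraph

variable {Γ : Type} [AddCommGroup Γ]

/-- The vertices spanned by a subset `S` of edges (the subgraph determined by `S`). -/
def verts (G : CGraph Γ) (S : Finset (Fin G.m)) : Finset (Fin G.n) :=
  S.image G.tail ∪ S.image G.head

/-- One step of a walk in the subgraph `S`, recorded together with the running gain:
an edge may be traversed forwards (adding its color) or backwards (subtracting it). -/
def liftStep (G : CGraph Γ) (S : Finset (Fin G.m)) (x y : Fin G.n × Γ) : Prop :=
  ∃ e ∈ S,
    (G.tail e = x.1 ∧ G.head e = y.1 ∧ y.2 = x.2 + G.color e) ∨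
    (G.head e = x.1 ∧ G.tail e = y.1 ∧ y.2 = x.2 - G.color e)

/-- The ρ-image of the component of `v` in the subgraph `S`: the subgroup of `Γ`
formed by the gains of closed walks in `S` based at `v`. -/
def gainGroup (G : CGraph Γ) (S : Finset (Fin G.m)) (v : Fin G.n) : AddSubgroup Γ :=
  AddSubgroup.closure {g : Γ | Relation.ReflTransGen (G.liftStep S) (v, 0) (v, g)}

/-- Adjacency (through an edge of `S`) on the vertices of the subgraph `S`. -/
def adj (G : CGraph Γ) (S : Finset (Fin G.m))
    (x y : {v : Fin G.n // v ∈ G.verts S}) : Prop :=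
  ∃ e ∈ S, (G.tail e = x.1 ∧ G.head e = y.1) ∨ (G.tail e = y.1 ∧ G.head e = x.1)

/-- The connected components of the subgraph `S`. -/
def comps (G : CGraph Γ) (S : Finset (Fin G.m)) : Type :=
  Quot (G.adj S)

/-- The component `x` of the subgraph `S` has trivial ρ-image. -/
def TrivComp (G : CGraph Γ) (S : Finset (Fin G.m)) (x : G.comps S) : Prop :=
  ∃ v, Quot.mk (G.adj S) v = x ∧ G.gainGroup S v.1 = ⊥

/-- The number of connected components of `S` with trivial ρ-image. -/
def c0 (G : CGraph Γ) (S : Finset (Fin G.m)) : ℕ :=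
  Nat.card {x : G.comps S // G.TrivComp S x}

/-- The number of connected components of `S` with nontrivial ρ-image. -/
def c1 (G : CGraph Γ) (S : Finset (Fin G.m)) : ℕ :=
  Nat.card {x : G.comps S // ¬ G.TrivComp S x}

/-- The total number of connected components of the subgraph `S`. -/
def numComps (G : CGraph Γ) (S : Finset (Fin G.m)) : ℕ :=
  Nat.card (G.comps S)

/-- `Λ(S)`: the subgroup of `Γ` generated by the ρ-images of all components of `S`. -/
def Lambda (G : CGraph Γ) (S : Finset (Fin G.m)) : AddSubgroup Γ :=
  ⨆ v ∈ G.verts S, G.gainGroup S v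

end CGraph

/-- The rank of a subgroup of `ℤ²`. -/
def zrank (H : AddSubgroup (ℤ × ℤ)) : ℕ :=
  Module.finrank ℤ (AddSubgroup.toIntSubmodule H)

namespace CGraph

/-- Colored-Laman sparsity for `ℤ²`-colored graphs. -/
def ColoredLamanSparse (G : CGraph (ℤ × ℤ)) : Prop :=
  ∀ S : Finset (Fin G.m), S.Nonempty →
    (S.card : ℤ) ≤ 2 * (G.verts S).card
      + max (2 * (zrank (G.Lambda S) : ℤ) - 1) 0
      - 3 * (G.c0 S : ℤ) - 2 * (G.c1 S : ℤ)

/-- A colored-Laman graph: colored-Laman sparse with `m = 2n + 1` edges. -/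
def ColoredLaman (G : CGraph (ℤ × ℤ)) : Prop :=
  G.ColoredLamanSparse ∧ (G.m : ℤ) = 2 * (G.n : ℤ) + 1

end CGraph

namespace CGraph

/-- A Ross graph: `m = 2n - 2` edges and every subgraph satisfies
`m' ≤ 2n' - 3c'₀ - 2c'₁`. -/
def Ross (G : CGraph (ℤ × ℤ)) : Prop :=
  (G.m : ℤ) = 2 * (G.n : ℤ) - 2 ∧
  ∀ S : Finset (Fin G.m), S.Nonempty →
    (S.card : ℤ) ≤ 2 * (G.verts S).card - 3 * (G.c0 S : ℤ) - 2 * (G.c1 S : ℤ)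

end CGraph

namespace CGraph

/-- The graph obtained from `G` by adding three self-loops at the vertex `u`,
colored `(1,0)`, `(0,1)` and `(1,1)`. -/
def addThreeLoops (G : CGraph (ℤ × ℤ)) (u : Fin G.n) : CGraph (ℤ × ℤ) where
  n := G.n
  m := G.m + 3
  tail := fun e => if h : (e : ℕ) < G.m then G.tail ⟨e, h⟩ else u
  head := fun e => if h : (e : ℕ) < G.m then G.head ⟨e, h⟩ else u
  color := fun e =>
    if h : (e : ℕ) < G.m then G.color ⟨e, h⟩
    else if (e : ℕ) = G.m then (1, 0)
    else if (e : ℕ) = G.m + 1 then (0, 1)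
    else (1, 1)

end CGraph

lemma Nat.card_subtype_and_ne_add_one {α : Type*} [Finite α] {p : α → Prop} {a : α}
    (ha : p a) : Nat.card {x // p x ∧ x ≠ a} + 1 = Nat.card {x // p x} := by
  have h : Nat.card {x // p x ∧ x ≠ a} = ({x | p x} \ {a} : Set α).ncard :=
    Nat.card_coe_set_eq _
  rw [h, Set.ncard_sdiff_singleton_add_one (s := {x | p x}) ha]
  exact (Nat.card_coe_set_eq _).symm

lemma zrank_le_two (H : AddSubgroup (ℤ × ℤ)) : zrank H ≤ 2 := by
  simpa [zrank] using Submodule.finrank_le (AddSubgroup.toIntSubmodule H)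

lemma zrank_bot : zrank ⊥ = 0 := by
  simp [zrank]

lemma one_le_zrank {H : AddSubgroup (ℤ × ℤ)} {x : ℤ × ℤ} (hx : x ∈ H) (hx0 : x ≠ 0) :
    1 ≤ zrank H := by
  rw [Nat.one_le_iff_ne_zero, zrank, Ne, Module.finrank_zero_iff]
  intro h
  exact hx0 (congrArg Subtype.val
    (Subsingleton.elim (⟨x, hx⟩ : AddSubgroup.toIntSubmodule H) 0))

lemma two_le_zrank {H : AddSubgroup (ℤ × ℤ)} {x y : ℤ × ℤ} (hx : x ∈ H) (hy : y ∈ H)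
    (hxy : LinearIndependent ℤ ![x, y]) : 2 ≤ zrank H := by
  let f : Fin 2 → AddSubgroup.toIntSubmodule H := ![⟨x, hx⟩, ⟨y, hy⟩]
  have hcomp : (AddSubgroup.toIntSubmodule H).subtype ∘ f = ![x, y] := by
    funext i
    fin_cases i <;> rfl
  have hf : LinearIndependent ℤ f :=
    LinearIndependent.of_comp (AddSubgroup.toIntSubmodule H).subtype (hcomp ▸ hxy)
  simpa [zrank] using hf.fintype_card_le_finrank

namespace CGraph

open Relation

section Walks

variable {Γ : Type} [AddCommGroup Γ] {G : CGraph Γ} {S S' : Finset (Fin G.m)}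

lemma liftStep_symm {x y : Fin G.n × Γ} (h : G.liftStep S x y) : G.liftStep S y x := by
  obtain ⟨e, he, h | h⟩ := h
  · exact ⟨e, he, Or.inr ⟨h.2.1, h.1, by rw [h.2.2]; abel⟩⟩
  · exact ⟨e, he, Or.inl ⟨h.2.1, h.1, by rw [h.2.2]; abel⟩⟩

lemma liftStep_shift (t : Γ) {x y : Fin G.n × Γ} (h : G.liftStep S x y) :
    G.liftStep S (x.1, x.2 + t) (y.1, y.2 + t) := by
  obtain ⟨e, he, h | h⟩ := h
  · exact ⟨e, he, Or.inl ⟨h.1, h.2.1, by simp only [h.2.2]; abel⟩⟩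
  · exact ⟨e, he, Or.inr ⟨h.1, h.2.1, by simp only [h.2.2]; abel⟩⟩

lemma liftStep_mono (h : S ⊆ S') {x y : Fin G.n × Γ} (hxy : G.liftStep S x y) :
    G.liftStep S' x y :=
  let ⟨e, he, hxy⟩ := hxy; ⟨e, h he, hxy⟩

lemma walk_mono (h : S ⊆ S') {x y : Fin G.n × Γ} (hxy : ReflTransGen (G.liftStep S) x y) :
    ReflTransGen (G.liftStep S') x y :=
  ReflTransGen.mono (fun _ _ => liftStep_mono h) _ _ hxy

lemma walk_shift (t : Γ) {x y : Fin G.n × Γ} (h : ReflTransGen (G.liftStep S) x y) :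
    ReflTransGen (G.liftStep S) (x.1, x.2 + t) (y.1, y.2 + t) :=
  ReflTransGen.lift (p := G.liftStep S) (fun p : Fin G.n × Γ => (p.1, p.2 + t))
    (fun _ _ => liftStep_shift t) _ _ h

lemma walk_symm {x y : Fin G.n × Γ} (h : ReflTransGen (G.liftStep S) x y) :
    ReflTransGen (G.liftStep S) y x :=
  (@ReflTransGen.stdSymm _ (G.liftStep S) ⟨fun _ _ => liftStep_symm⟩).symm _ _ h

def Reach (G : CGraph Γ) (S : Finset (Fin G.m)) (v w : Fin G.n) : Prop :=
  ∃ g, ReflTransGen (G.liftStep S) (v, 0) (w, g)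

lemma Reach.refl (v : Fin G.n) : G.Reach S v v := ⟨0, .refl⟩

lemma Reach.mono (h : S ⊆ S') {v w : Fin G.n} (hvw : G.Reach S v w) : G.Reach S' v w :=
  let ⟨g, hvw⟩ := hvw; ⟨g, walk_mono h hvw⟩

lemma reach_of_walk {v w : Fin G.n} {a b : Γ}
    (h : ReflTransGen (G.liftStep S) (v, a) (w, b)) : G.Reach S v w :=
  ⟨b - a, by simpa [sub_eq_add_neg] using walk_shift (-a) h⟩

lemma Reach.symm {v w : Fin G.n} (h : G.Reach S v w) : G.Reach S w v :=
  let ⟨_, h⟩ := h; reach_of_walk (walk_symm h)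

lemma Reach.trans {v w x : Fin G.n} (h : G.Reach S v w) (h' : G.Reach S w x) :
    G.Reach S v x := by
  obtain ⟨g, h⟩ := h
  obtain ⟨g', h'⟩ := h'
  exact reach_of_walk (h.trans (by simpa using walk_shift g h'))

lemma reach_of_liftStep {x y : Fin G.n × Γ} (h : G.liftStep S x y) : G.Reach S x.1 y.1 :=
  reach_of_walk (.single h)

lemma reach_tail_head {e : Fin G.m} (he : e ∈ S) : G.Reach S (G.tail e) (G.head e) :=
  reach_of_liftStep (x := (G.tail e, 0)) (y := (G.head e, G.color e))
    ⟨e, he, Or.inl ⟨rfl, rfl, (zero_add _).symm⟩⟩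

lemma gainGroup_mono (h : S ⊆ S') (v : Fin G.n) : G.gainGroup S v ≤ G.gainGroup S' v :=
  AddSubgroup.closure_mono fun _ => walk_mono h

lemma color_mem_gainGroup {e : Fin G.m} (he : e ∈ S) {v : Fin G.n} (ht : G.tail e = v)
    (hh : G.head e = v) : G.color e ∈ G.gainGroup S v :=
  AddSubgroup.subset_closure
    (ReflTransGen.single ⟨e, he, Or.inl ⟨ht, hh, (zero_add _).symm⟩⟩)

/-- Conjugating a closed walk at `v` by a walk from `w` to `v` gives a closed walk at `w`
with the same gain. -/
lemma gainGroup_le_of_reach {v w : Fin G.n} (h : G.Reach S v w) :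
    G.gainGroup S v ≤ G.gainGroup S w := by
  obtain ⟨g₀, hvw⟩ := h
  refine AddSubgroup.closure_mono fun g hg => ?_
  have back : ReflTransGen (G.liftStep S) (w, 0) (v, -g₀) := by
    simpa using walk_shift (-g₀) (walk_symm hvw)
  have loop : ReflTransGen (G.liftStep S) (v, -g₀) (v, g + -g₀) := by
    simpa using walk_shift (-g₀) hg
  have forth : ReflTransGen (G.liftStep S) (v, g + -g₀) (w, g) := by
    simpa [add_comm, add_left_comm] using walk_shift (g + -g₀) hvw
  exact (back.trans loop).trans forth

lemma gainGroup_eq_of_reach {v w : Fin G.n} (h : G.Reach S v w) :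
    G.gainGroup S v = G.gainGroup S w :=
  le_antisymm (gainGroup_le_of_reach h) (gainGroup_le_of_reach h.symm)

def Confined (G : CGraph Γ) (S S' : Finset (Fin G.m)) (W : Set (Fin G.n)) : Prop :=
  ∀ e ∈ S', G.tail e ∈ W ∨ G.head e ∈ W → e ∈ S ∧ G.tail e ∈ W ∧ G.head e ∈ W

lemma Confined.walk {W : Set (Fin G.n)} (hW : G.Confined S S' W)
    {x y : Fin G.n × Γ} (hx : x.1 ∈ W) (h : ReflTransGen (G.liftStep S') x y) :
    ReflTransGen (G.liftStep S) x y ∧ y.1 ∈ W := by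
  induction h with
  | refl => exact ⟨.refl, hx⟩
  | tail _ step ih =>
    obtain ⟨e, he, hor⟩ := step
    have touches : G.tail e ∈ W ∨ G.head e ∈ W := by
      rcases hor with ⟨h, -⟩ | ⟨h, -⟩
      · exact .inl (h ▸ ih.2)
      · exact .inr (h ▸ ih.2)
    obtain ⟨heS, htW, hhW⟩ := hW e he touches
    refine ⟨ih.1.tail ⟨e, heS, hor⟩, ?_⟩
    rcases hor with ⟨-, h, -⟩ | ⟨-, h, -⟩
    · exact h ▸ hhW
    · exact h ▸ htW

lemma Confined.reach {W : Set (Fin G.n)} (hW : G.Confined S S' W)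
    {v w : Fin G.n} (hv : v ∈ W) (h : G.Reach S' v w) : G.Reach S v w ∧ w ∈ W :=
  let ⟨g, h⟩ := h
  let ⟨h, hw⟩ := hW.walk hv h
  ⟨⟨g, h⟩, hw⟩

lemma Confined.gainGroup_eq {W : Set (Fin G.n)} (hW : G.Confined S S' W) (hSS' : S ⊆ S')
    {v : Fin G.n} (hv : v ∈ W) : G.gainGroup S' v = G.gainGroup S v :=
  le_antisymm (AddSubgroup.closure_mono fun _ hg => (hW.walk hv hg).1)
    (gainGroup_mono hSS' v)

end Walks

section Components

variable {Γ : Type} {G : CGraph Γ} {S S' : Finset (Fin G.m)}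

lemma tail_mem_verts {e : Fin G.m} (he : e ∈ S) : G.tail e ∈ G.verts S :=
  Finset.mem_union_left _ (Finset.mem_image_of_mem _ he)

lemma head_mem_verts {e : Fin G.m} (he : e ∈ S) : G.head e ∈ G.verts S :=
  Finset.mem_union_right _ (Finset.mem_image_of_mem _ he)

lemma verts_mono (h : S ⊆ S') : G.verts S ⊆ G.verts S' :=
  Finset.union_subset_union (Finset.image_subset_image h) (Finset.image_subset_image h)

lemma verts_union (S S' : Finset (Fin G.m)) : G.verts (S ∪ S') = G.verts S ∪ G.verts S' := by
  simp only [verts, Finset.image_union]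
  ac_rfl

lemma verts_empty : G.verts ∅ = ∅ := by
  simp [verts]

def compsMap (h : S ⊆ S') : G.comps S → G.comps S' :=
  Quot.map (fun a => ⟨a.1, verts_mono h a.2⟩) fun _ _ ⟨e, he, hor⟩ => ⟨e, h he, hor⟩

variable [AddCommGroup Γ]

lemma mem_verts_of_liftStep {x y : Fin G.n × Γ} (h : G.liftStep S x y) :
    x.1 ∈ G.verts S ∧ y.1 ∈ G.verts S := by
  obtain ⟨e, he, ⟨hx, hy, -⟩ | ⟨hx, hy, -⟩⟩ := h
  · exact ⟨hx ▸ tail_mem_verts he, hy ▸ head_mem_verts he⟩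
  · exact ⟨hx ▸ head_mem_verts he, hy ▸ tail_mem_verts he⟩

lemma reach_of_adj {a b : {v // v ∈ G.verts S}} (h : G.adj S a b) : G.Reach S a.1 b.1 := by
  obtain ⟨e, he, ⟨ha, hb⟩ | ⟨hb, ha⟩⟩ := h
  · exact ha ▸ hb ▸ reach_tail_head he
  · exact ha ▸ hb ▸ (reach_tail_head he).symm

lemma mk_eq_mk_of_walk (a : {v // v ∈ G.verts S}) {y : Fin G.n × Γ}
    (h : ReflTransGen (G.liftStep S) (a.1, 0) y) (hy : y.1 ∈ G.verts S) :
    Quot.mk (G.adj S) a = Quot.mk (G.adj S) ⟨y.1, hy⟩ := by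
  induction h with
  | refl => rfl
  | tail _ step ih =>
    obtain ⟨e, he, hor⟩ := step
    have hx := (mem_verts_of_liftStep ⟨e, he, hor⟩).1
    refine (ih hx).trans (Quot.sound ⟨e, he, ?_⟩)
    rcases hor with ⟨ht, hh, -⟩ | ⟨hh, ht, -⟩
    · exact .inl ⟨ht, hh⟩
    · exact .inr ⟨ht, hh⟩

lemma mk_eq_mk_iff_reach {a b : {v // v ∈ G.verts S}} :
    Quot.mk (G.adj S) a = Quot.mk (G.adj S) b ↔ G.Reach S a.1 b.1 := by
  constructor
  · intro h
    have hg := Quot.eqvGen_exact h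
    clear h
    induction hg with
    | rel _ _ hab => exact reach_of_adj hab
    | refl => exact Reach.refl _
    | symm _ _ _ ih => exact ih.symm
    | trans _ _ _ _ _ ih ih' => exact ih.trans ih'
  · rintro ⟨g, h⟩
    exact mk_eq_mk_of_walk a h b.2

lemma trivComp_mk {a : {v // v ∈ G.verts S}} :
    G.TrivComp S (Quot.mk (G.adj S) a) ↔ G.gainGroup S a.1 = ⊥ :=
  ⟨fun ⟨_, hq, hbot⟩ => gainGroup_eq_of_reach (mk_eq_mk_iff_reach.mp hq) ▸ hbot,
    fun h => ⟨a, rfl, h⟩⟩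

instance (G : CGraph Γ) (S : Finset (Fin G.m)) : Finite (G.comps S) :=
  Finite.of_surjective (Quot.mk (G.adj S)) Quot.exists_rep

lemma c0_add_c1 (G : CGraph Γ) (S : Finset (Fin G.m)) : G.c0 S + G.c1 S = G.numComps S :=
  by classical exact Nat.card_sum.symm.trans (Nat.card_congr (Equiv.sumCompl _))

def rossBound (G : CGraph Γ) (S : Finset (Fin G.m)) : ℤ :=
  2 * (G.verts S).card - 3 * (G.c0 S : ℤ) - 2 * (G.c1 S : ℤ)

lemma rossBound_eq (G : CGraph Γ) (S : Finset (Fin G.m)) :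
    G.rossBound S = 2 * (G.verts S).card - G.c0 S - 2 * G.numComps S := by
  rw [rossBound, ← c0_add_c1]
  push_cast
  ring

lemma rossBound_empty (G : CGraph Γ) : G.rossBound ∅ = 0 := by
  have : IsEmpty (G.comps ∅) :=
    ⟨fun x => Quot.inductionOn x fun a => by simpa [verts_empty] using a.2⟩
  simp [rossBound, c0, c1, verts_empty]

lemma compsMap_injective (h : S ⊆ S')
    (hreach : ∀ v w, v ∈ G.verts S → G.Reach S' v w → G.Reach S v w) :
    Function.Injective (compsMap h) := by
  refine fun x y => Quot.induction_on₂ x y fun a b hab => ?_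
  exact mk_eq_mk_iff_reach.mpr (hreach _ _ a.2 (mk_eq_mk_iff_reach.mp hab))

lemma gainGroup_le_Lambda {v : Fin G.n} (hv : v ∈ G.verts S) : G.gainGroup S v ≤ G.Lambda S :=
  le_iSup₂ (f := fun w (_ : w ∈ G.verts S) => G.gainGroup S w) v hv

lemma Lambda_eq_bot (h : ∀ v ∈ G.verts S, G.gainGroup S v = ⊥) : G.Lambda S = ⊥ :=
  iSup₂_eq_bot.mpr h

end Components

section DisjointUnion

variable {Γ : Type} {G : CGraph Γ} {A B : Finset (Fin G.m)}

lemma confined_of_disjoint (hd : Disjoint (G.verts A) (G.verts B)) :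
    G.Confined A (A ∪ B) (G.verts A : Set (Fin G.n)) := by
  intro e he htouch
  rcases Finset.mem_union.mp he with heA | heB
  · exact ⟨heA, tail_mem_verts heA, head_mem_verts heA⟩
  · exfalso
    rcases htouch with h | h
    · exact Finset.disjoint_left.mp hd h (tail_mem_verts heB)
    · exact Finset.disjoint_left.mp hd h (head_mem_verts heB)

variable [AddCommGroup Γ]

lemma reach_of_reach_union_of_disjoint (hd : Disjoint (G.verts A) (G.verts B)) {v w : Fin G.n}
    (hv : v ∈ G.verts A) (h : G.Reach (A ∪ B) v w) : G.Reach A v w ∧ w ∈ G.verts A :=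
  (confined_of_disjoint hd).reach hv h

lemma gainGroup_union_of_disjoint (hd : Disjoint (G.verts A) (G.verts B)) {v : Fin G.n}
    (hv : v ∈ G.verts A) : G.gainGroup (A ∪ B) v = G.gainGroup A v :=
  (confined_of_disjoint hd).gainGroup_eq Finset.subset_union_left hv

def compsSumEquiv (hd : Disjoint (G.verts A) (G.verts B)) :
    G.comps A ⊕ G.comps B ≃ G.comps (A ∪ B) := by
  refine Equiv.ofBijective (Sum.elim (compsMap Finset.subset_union_left)
    (compsMap Finset.subset_union_right)) ⟨?_, ?_⟩
  · refine Function.Injective.sumElim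
      (compsMap_injective _ fun _ _ hv h => (reach_of_reach_union_of_disjoint hd hv h).1)
      (compsMap_injective _ fun _ _ hv h =>
        (reach_of_reach_union_of_disjoint hd.symm hv (Finset.union_comm A B ▸ h)).1)
      fun x y => Quot.induction_on₂ x y fun a b hab => ?_
    have hb := (reach_of_reach_union_of_disjoint hd a.2 (mk_eq_mk_iff_reach.mp hab)).2
    exact Finset.disjoint_left.mp hd hb b.2
  · refine fun x => Quot.inductionOn x fun a => ?_
    have ha : a.1 ∈ G.verts A ∪ G.verts B := by rw [← verts_union]; exact a.2
    rcases Finset.mem_union.mp ha with ha | ha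
    · exact ⟨.inl (Quot.mk _ ⟨a.1, ha⟩), rfl⟩
    · exact ⟨.inr (Quot.mk _ ⟨a.1, ha⟩), rfl⟩

lemma c0_union_of_disjoint (hd : Disjoint (G.verts A) (G.verts B)) :
    G.c0 (A ∪ B) = G.c0 A + G.c0 B := by
  have htriv : ∀ y, Sum.elim (G.TrivComp A) (G.TrivComp B) y ↔
      G.TrivComp (A ∪ B) (compsSumEquiv hd y) := by
    rintro (x | x) <;> refine Quot.inductionOn x fun a => ?_
    · show G.TrivComp A (Quot.mk _ a) ↔ G.TrivComp (A ∪ B) (Quot.mk _ ⟨a.1, _⟩)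
      rw [trivComp_mk, trivComp_mk, gainGroup_union_of_disjoint hd a.2]
    · show G.TrivComp B (Quot.mk _ a) ↔ G.TrivComp (A ∪ B) (Quot.mk _ ⟨a.1, _⟩)
      have h := gainGroup_union_of_disjoint hd.symm a.2
      rw [Finset.union_comm] at h
      rw [trivComp_mk, trivComp_mk, h]
  rw [c0, ← Nat.card_congr ((compsSumEquiv hd).subtypeEquiv htriv),
    Nat.card_congr Equiv.subtypeSum, Nat.card_sum]
  rfl

lemma numComps_union_of_disjoint (hd : Disjoint (G.verts A) (G.verts B)) :
    G.numComps (A ∪ B) = G.numComps A + G.numComps B :=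
  (Nat.card_congr (compsSumEquiv hd).symm).trans Nat.card_sum

lemma rossBound_union_of_disjoint (hd : Disjoint (G.verts A) (G.verts B)) :
    G.rossBound (A ∪ B) = G.rossBound A + G.rossBound B := by
  simp only [rossBound_eq, verts_union, Finset.card_union_of_disjoint hd,
    c0_union_of_disjoint hd, numComps_union_of_disjoint hd]
  push_cast
  ring

lemma gainGroup_prop_of_mem_verts {S : Finset (Fin G.m)} {p : AddSubgroup Γ → Prop}
    (hA : A ⊆ S) (hp : ∀ e ∈ A, p (G.gainGroup S (G.tail e))) {v : Fin G.n}
    (hv : v ∈ G.verts A) :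
    p (G.gainGroup S v) := by
  simp only [verts, Finset.mem_union, Finset.mem_image] at hv
  rcases hv with ⟨e, he, rfl⟩ | ⟨e, he, rfl⟩
  · exact hp e he
  · exact gainGroup_eq_of_reach (reach_tail_head (hA he)) ▸ hp e he

end DisjointUnion

section Loops

variable {Γ : Type} {G : CGraph Γ} {S L : Finset (Fin G.m)} {u : Fin G.n}

lemma verts_eq_singleton_of_loops (hL : ∀ e ∈ L, G.tail e = u ∧ G.head e = u)
    (hLne : L.Nonempty) : G.verts L = {u} := by
  ext v
  simp only [verts, Finset.mem_union, Finset.mem_image, Finset.mem_singleton]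
  constructor
  · rintro (⟨e, he, rfl⟩ | ⟨e, he, rfl⟩)
    · exact (hL e he).1
    · exact (hL e he).2
  · rintro rfl
    obtain ⟨e, he⟩ := hLne
    exact .inl ⟨e, he, (hL e he).1⟩

lemma verts_union_loops_of_mem (hL : ∀ e ∈ L, G.tail e = u ∧ G.head e = u)
    (hu : u ∈ G.verts S) : G.verts (S ∪ L) = G.verts S := by
  rcases L.eq_empty_or_nonempty with rfl | hLne
  · rw [Finset.union_empty]
  · rw [verts_union, verts_eq_singleton_of_loops hL hLne,
      Finset.union_eq_left.mpr (Finset.singleton_subset_iff.mpr hu)]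

variable [AddCommGroup Γ]

lemma gainGroup_ne_bot_of_loops (hL : ∀ e ∈ L, G.tail e = u ∧ G.head e = u)
    (hL0 : ∃ e ∈ L, G.color e ≠ 0) (hLS : L ⊆ S) : G.gainGroup S u ≠ ⊥ := by
  obtain ⟨e, he, hc⟩ := hL0
  intro hbot
  have := color_mem_gainGroup (hLS he) (hL e he).1 (hL e he).2
  rw [hbot, AddSubgroup.mem_bot] at this
  exact hc this

lemma reach_of_reach_union_loops (hL : ∀ e ∈ L, G.tail e = u ∧ G.head e = u)
    {v w : Fin G.n} (h : G.Reach (S ∪ L) v w) : G.Reach S v w := by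
  obtain ⟨g, h⟩ := h
  suffices ∀ y, ReflTransGen (G.liftStep (S ∪ L)) (v, 0) y → G.Reach S v y.1 from this _ h
  intro y hy
  induction hy with
  | refl => exact Reach.refl v
  | tail _ step ih =>
    obtain ⟨e, he, hor⟩ := step
    rcases Finset.mem_union.mp he with heS | heL
    · exact ih.trans (reach_of_liftStep ⟨e, heS, hor⟩)
    · obtain ⟨ht, hh⟩ := hL e heL
      rcases hor with ⟨h₁, h₂, -⟩ | ⟨h₁, h₂, -⟩
      · rwa [← h₂, hh, ← ht, h₁]
      · rwa [← h₂, ht, ← hh, h₁]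

lemma confined_not_reach_loops (hL : ∀ e ∈ L, G.tail e = u ∧ G.head e = u) :
    G.Confined S (S ∪ L) {w | ¬ G.Reach (S ∪ L) w u} := by
  intro e he htouch
  have hth := reach_tail_head he
  have htW : ¬ G.Reach (S ∪ L) (G.tail e) u :=
    fun h => htouch.elim (· h) (· (hth.symm.trans h))
  have hhW : ¬ G.Reach (S ∪ L) (G.head e) u :=
    fun h => htouch.elim (· (hth.trans h)) (· h)
  refine ⟨?_, htW, hhW⟩
  rcases Finset.mem_union.mp he with heS | heL
  · exact heS
  · exact absurd (by rw [(hL e heL).1]; exact Reach.refl u) htW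

lemma rossBound_loops (hL : ∀ e ∈ L, G.tail e = u ∧ G.head e = u)
    (hL0 : ∃ e ∈ L, G.color e ≠ 0) : G.rossBound L = 0 := by
  have hverts := verts_eq_singleton_of_loops hL (let ⟨e, he, _⟩ := hL0; ⟨e, he⟩)
  have mem_u (a : {v // v ∈ G.verts L}) : a.1 = u := by simpa [hverts] using a.2
  have hN : G.numComps L = 1 := by
    have hu : u ∈ G.verts L := by simp [hverts]
    refine Nat.card_eq_one_iff_unique.mpr
      ⟨⟨fun x y => Quot.induction_on₂ x y fun a b => ?_⟩, ⟨Quot.mk _ ⟨u, hu⟩⟩⟩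
    exact congrArg _ (Subtype.ext ((mem_u a).trans (mem_u b).symm))
  have hc0 : G.c0 L = 0 := by
    refine Nat.card_eq_zero.mpr (.inl ⟨fun ⟨x, hx⟩ => ?_⟩)
    induction x using Quot.ind with
    | mk a =>
      rw [trivComp_mk, mem_u a] at hx
      exact gainGroup_ne_bot_of_loops hL hL0 subset_rfl hx
  rw [rossBound_eq, hverts, hN, hc0]
  simp

lemma rossBound_union_loops_of_not_mem (hL : ∀ e ∈ L, G.tail e = u ∧ G.head e = u)
    (hL0 : ∃ e ∈ L, G.color e ≠ 0) (hu : u ∉ G.verts S) :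
    G.rossBound (S ∪ L) = G.rossBound S := by
  have hd : Disjoint (G.verts S) (G.verts L) := by
    rw [verts_eq_singleton_of_loops hL (let ⟨e, he, _⟩ := hL0; ⟨e, he⟩)]
    exact Finset.disjoint_singleton_right.mpr hu
  rw [rossBound_union_of_disjoint hd, rossBound_loops hL hL0, add_zero]

def compsUnionLoopsEquiv (hL : ∀ e ∈ L, G.tail e = u ∧ G.head e = u) (hu : u ∈ G.verts S) :
    G.comps S ≃ G.comps (S ∪ L) := by
  refine Equiv.ofBijective (compsMap Finset.subset_union_left)
    ⟨compsMap_injective _ fun _ _ _ => reach_of_reach_union_loops hL, fun x => ?_⟩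
  refine Quot.inductionOn x fun a => ⟨Quot.mk _ ⟨a.1, ?_⟩, rfl⟩
  exact verts_union_loops_of_mem hL hu ▸ a.2

lemma trivComp_compsUnionLoopsEquiv (hL : ∀ e ∈ L, G.tail e = u ∧ G.head e = u)
    (hL0 : ∃ e ∈ L, G.color e ≠ 0) (hu : u ∈ G.verts S) (x : G.comps S) :
    G.TrivComp (S ∪ L) (compsUnionLoopsEquiv hL hu x) ↔
      G.TrivComp S x ∧ x ≠ Quot.mk _ ⟨u, hu⟩ := by
  induction x using Quot.ind with
  | mk a =>
    show G.TrivComp (S ∪ L) (Quot.mk _ ⟨a.1, _⟩) ↔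
      G.TrivComp S (Quot.mk _ a) ∧ ¬ Quot.mk (G.adj S) a = Quot.mk (G.adj S) ⟨u, hu⟩
    rw [trivComp_mk, trivComp_mk, mk_eq_mk_iff_reach]
    by_cases hr : G.Reach S a.1 u
    · simp only [hr, not_true_eq_false, and_false, iff_false]
      rw [gainGroup_eq_of_reach (hr.mono Finset.subset_union_left)]
      exact gainGroup_ne_bot_of_loops hL hL0 Finset.subset_union_right
    · simp only [hr, not_false_eq_true, and_true]
      rw [(confined_not_reach_loops hL).gainGroup_eq Finset.subset_union_left
        fun h => hr (reach_of_reach_union_loops hL h)]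

lemma c0_union_loops_eq_card (hL : ∀ e ∈ L, G.tail e = u ∧ G.head e = u)
    (hL0 : ∃ e ∈ L, G.color e ≠ 0) (hu : u ∈ G.verts S) :
    G.c0 (S ∪ L) = Nat.card {x // G.TrivComp S x ∧ x ≠ Quot.mk _ ⟨u, hu⟩} :=
  (Nat.card_congr ((compsUnionLoopsEquiv hL hu).subtypeEquiv
    fun x => (trivComp_compsUnionLoopsEquiv hL hL0 hu x).symm)).symm

lemma rossBound_union_loops_of_trivial (hL : ∀ e ∈ L, G.tail e = u ∧ G.head e = u)
    (hL0 : ∃ e ∈ L, G.color e ≠ 0) (hu : u ∈ G.verts S) (htriv : G.gainGroup S u = ⊥) :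
    G.rossBound (S ∪ L) = G.rossBound S + 1 := by
  have hc0 : G.c0 (S ∪ L) + 1 = G.c0 S := by
    rw [c0_union_loops_eq_card hL hL0 hu]
    exact Nat.card_subtype_and_ne_add_one (trivComp_mk.mpr htriv)
  have hN : G.numComps (S ∪ L) = G.numComps S := Nat.card_congr (compsUnionLoopsEquiv hL hu).symm
  rw [rossBound_eq, rossBound_eq, verts_union_loops_of_mem hL hu, ← hc0, hN]
  push_cast
  ring

lemma rossBound_union_loops_of_nontrivial (hL : ∀ e ∈ L, G.tail e = u ∧ G.head e = u)
    (hL0 : ∃ e ∈ L, G.color e ≠ 0) (hnt : u ∈ G.verts S → G.gainGroup S u ≠ ⊥) :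
    G.rossBound (S ∪ L) = G.rossBound S := by
  by_cases hu : u ∈ G.verts S
  · have hc0 : G.c0 (S ∪ L) = G.c0 S := by
      rw [c0_union_loops_eq_card hL hL0 hu]
      refine Nat.card_congr
        (Equiv.subtypeEquivRight fun x => ⟨And.left, fun h => ⟨h, fun hx => ?_⟩⟩)
      rw [hx, trivComp_mk] at h
      exact hnt hu h
    have hN : G.numComps (S ∪ L) = G.numComps S :=
      Nat.card_congr (compsUnionLoopsEquiv hL hu).symm
    rw [rossBound_eq, rossBound_eq, verts_union_loops_of_mem hL hu, hc0, hN]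
  · exact rossBound_union_loops_of_not_mem hL hL0 hu

lemma rossBound_le_rossBound_union_loops (hL : ∀ e ∈ L, G.tail e = u ∧ G.head e = u)
    (hL0 : ∃ e ∈ L, G.color e ≠ 0) : G.rossBound S ≤ G.rossBound (S ∪ L) := by
  by_cases h : u ∈ G.verts S ∧ G.gainGroup S u = ⊥
  · rw [rossBound_union_loops_of_trivial hL hL0 h.1 h.2]
    exact le_add_of_nonneg_right zero_le_one
  · rw [rossBound_union_loops_of_nontrivial hL hL0 fun hu htriv => h ⟨hu, htriv⟩]

end Loops

section Sparsity

def rankTerm (G : CGraph (ℤ × ℤ)) (S : Finset (Fin G.m)) : ℤ :=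
  max (2 * (zrank (G.Lambda S) : ℤ) - 1) 0

lemma rankTerm_nonneg (G : CGraph (ℤ × ℤ)) (S : Finset (Fin G.m)) : 0 ≤ G.rankTerm S :=
  le_max_right _ _

lemma rankTerm_le_three (G : CGraph (ℤ × ℤ)) (S : Finset (Fin G.m)) : G.rankTerm S ≤ 3 := by
  have := zrank_le_two (G.Lambda S)
  rw [rankTerm]
  omega

lemma coloredLamanSparse_iff {G : CGraph (ℤ × ℤ)} : G.ColoredLamanSparse ↔
    ∀ S : Finset (Fin G.m), S.Nonempty → (S.card : ℤ) ≤ G.rossBound S + G.rankTerm S := by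
  refine forall₂_congr fun S _ => ?_
  rw [rossBound, rankTerm]
  constructor <;> intro h <;> linarith

lemma Ross.card_le_rossBound {G : CGraph (ℤ × ℤ)} (h : G.Ross) (T : Finset (Fin G.m)) :
    (T.card : ℤ) ≤ G.rossBound T := by
  rcases T.eq_empty_or_nonempty with rfl | hT
  · simp [rossBound_empty]
  · exact h.2 T hT

end Sparsity

section AddThreeLoops

variable {G : CGraph (ℤ × ℤ)} {u : Fin G.n}

def oldEdge (G : CGraph (ℤ × ℤ)) (u : Fin G.n) : Fin G.m ↪ Fin (G.addThreeLoops u).m :=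
  Fin.castAddEmb 3

def loopEdge (G : CGraph (ℤ × ℤ)) (u : Fin G.n) : Fin 3 ↪ Fin (G.addThreeLoops u).m :=
  Fin.natAddEmb G.m

def newLoops (G : CGraph (ℤ × ℤ)) (u : Fin G.n) : Finset (Fin (G.addThreeLoops u).m) :=
  Finset.univ.map (loopEdge G u)

@[simp] lemma tail_oldEdge (e : Fin G.m) : (G.addThreeLoops u).tail (oldEdge G u e) = G.tail e :=
  dif_pos e.isLt

@[simp] lemma head_oldEdge (e : Fin G.m) : (G.addThreeLoops u).head (oldEdge G u e) = G.head e :=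
  dif_pos e.isLt

@[simp] lemma color_oldEdge (e : Fin G.m) :
    (G.addThreeLoops u).color (oldEdge G u e) = G.color e :=
  dif_pos e.isLt

lemma color_loopEdge (i : Fin 3) :
    (G.addThreeLoops u).color (loopEdge G u i) = ![(1, 0), (0, 1), (1, 1)] i := by
  show (if h : G.m + (i : ℕ) < G.m then G.color ⟨G.m + i, h⟩
    else if G.m + (i : ℕ) = G.m then ((1, 0) : ℤ × ℤ)
    else if G.m + (i : ℕ) = G.m + 1 then (0, 1) else (1, 1)) = _
  fin_cases i <;> simp

lemma card_newLoops : (newLoops G u).card = 3 := by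
  rw [newLoops, Finset.card_map, Finset.card_univ, Fintype.card_fin]

lemma mem_newLoops {e : Fin (G.addThreeLoops u).m} : e ∈ newLoops G u ↔ G.m ≤ e := by
  have he : (e : ℕ) < G.m + 3 := e.isLt
  constructor
  · intro hl
    obtain ⟨i, -, rfl⟩ := Finset.mem_map.mp hl
    exact Nat.le_add_right _ _
  · intro h
    exact Finset.mem_map.mpr ⟨⟨e - G.m, by omega⟩, Finset.mem_univ _,
      Fin.ext (show G.m + (e - G.m) = e by omega)⟩

lemma newLoops_isLoop {e : Fin (G.addThreeLoops u).m} (he : e ∈ newLoops G u) :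
    (G.addThreeLoops u).tail e = u ∧ (G.addThreeLoops u).head e = u :=
  ⟨dif_neg (Nat.not_lt.mpr (mem_newLoops.mp he)), dif_neg (Nat.not_lt.mpr (mem_newLoops.mp he))⟩

lemma color_newLoops_ne_zero {e : Fin (G.addThreeLoops u).m} (he : e ∈ newLoops G u) :
    (G.addThreeLoops u).color e ≠ 0 := by
  obtain ⟨i, -, rfl⟩ := Finset.mem_map.mp he
  rw [color_loopEdge]
  fin_cases i <;> simp

lemma linearIndependent_color_newLoops {e e' : Fin (G.addThreeLoops u).m}
    (he : e ∈ newLoops G u) (he' : e' ∈ newLoops G u) (hne : e ≠ e') :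
    LinearIndependent ℤ ![(G.addThreeLoops u).color e, (G.addThreeLoops u).color e'] := by
  obtain ⟨i, -, rfl⟩ := Finset.mem_map.mp he
  obtain ⟨j, -, rfl⟩ := Finset.mem_map.mp he'
  rw [color_loopEdge, color_loopEdge, LinearIndependent.pair_iff]
  intro s t hst
  fin_cases i <;> fin_cases j <;> simp_all [Prod.ext_iff] <;> omega

lemma disjoint_map_oldEdge_newLoops (T : Finset (Fin G.m)) :
    Disjoint (T.map (oldEdge G u)) (newLoops G u) := by
  refine Finset.disjoint_left.mpr fun e he hl => ?_
  obtain ⟨e, -, rfl⟩ := Finset.mem_map.mp he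
  exact absurd (mem_newLoops.mp hl) (Nat.not_le.mpr e.isLt)

lemma exists_eq_map_oldEdge_union (S : Finset (Fin (G.addThreeLoops u).m)) :
    ∃ (T : Finset (Fin G.m)) (L : Finset (Fin (G.addThreeLoops u).m)),
      L ⊆ newLoops G u ∧ S = T.map (oldEdge G u) ∪ L := by
  classical
  refine ⟨Finset.univ.filter (oldEdge G u · ∈ S), S ∩ newLoops G u,
    Finset.inter_subset_right, Finset.ext fun e => ?_⟩
  simp only [Finset.mem_union, Finset.mem_inter, Finset.mem_map, Finset.mem_filter,
    Finset.mem_univ, true_and]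
  by_cases h : (e : ℕ) < G.m
  · have hnl : e ∉ newLoops G u := fun hl => Nat.not_le.mpr h (mem_newLoops.mp hl)
    simp only [hnl, and_false, or_false]
    exact ⟨fun hS => ⟨⟨e, h⟩, hS, rfl⟩, fun ⟨_, hS, he⟩ => he ▸ hS⟩
  · simp only [mem_newLoops.mpr (Nat.not_lt.mp h), and_true]
    exact ⟨Or.inr, fun h' => h'.elim (fun ⟨_, hS, he⟩ => he ▸ hS) id⟩

lemma liftStep_map_oldEdge (T : Finset (Fin G.m)) :
    (G.addThreeLoops u).liftStep (T.map (oldEdge G u)) = G.liftStep T := by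
  ext x y
  simp only [liftStep, Finset.mem_map, exists_exists_and_eq_and, tail_oldEdge, head_oldEdge,
    color_oldEdge]
  rfl

lemma verts_map_oldEdge (T : Finset (Fin G.m)) :
    (G.addThreeLoops u).verts (T.map (oldEdge G u)) = G.verts T := by
  have htail : (G.addThreeLoops u).tail ∘ oldEdge G u = G.tail := funext tail_oldEdge
  have hhead : (G.addThreeLoops u).head ∘ oldEdge G u = G.head := funext head_oldEdge
  simp only [verts, Finset.map_eq_image, Finset.image_image, htail, hhead]
  rfl

lemma gainGroup_map_oldEdge (T : Finset (Fin G.m)) (v : Fin G.n) :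
    (G.addThreeLoops u).gainGroup (T.map (oldEdge G u)) v = G.gainGroup T v := by
  unfold gainGroup
  rw [liftStep_map_oldEdge]
  rfl

def compsMapOldEdgeEquiv (T : Finset (Fin G.m)) :
    (G.addThreeLoops u).comps (T.map (oldEdge G u)) ≃ G.comps T :=
  Quot.congr (Equiv.subtypeEquivRight fun v => by rw [verts_map_oldEdge]; rfl)
    fun a b => by
      simp only [adj, Finset.mem_map, exists_exists_and_eq_and, tail_oldEdge, head_oldEdge]
      rfl

lemma rossBound_map_oldEdge (T : Finset (Fin G.m)) :
    (G.addThreeLoops u).rossBound (T.map (oldEdge G u)) = G.rossBound T := by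
  have htriv (x) : (G.addThreeLoops u).TrivComp (T.map (oldEdge G u)) x ↔
      G.TrivComp T (compsMapOldEdgeEquiv T x) := by
    induction x using Quot.ind with
    | mk a =>
      show _ ↔ G.TrivComp T (Quot.mk _ ⟨a.1, _⟩)
      rw [trivComp_mk, trivComp_mk]
      exact Iff.of_eq (congrArg (· = ⊥) (gainGroup_map_oldEdge T a.1))
  have hc0 : (G.addThreeLoops u).c0 (T.map (oldEdge G u)) = G.c0 T :=
    Nat.card_congr ((compsMapOldEdgeEquiv T).subtypeEquiv htriv)
  have hN : (G.addThreeLoops u).numComps (T.map (oldEdge G u)) = G.numComps T :=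
    Nat.card_congr (compsMapOldEdgeEquiv T)
  rw [rossBound_eq, rossBound_eq, verts_map_oldEdge, hc0, hN]
  rfl

lemma card_le_rankTerm {L S : Finset (Fin (G.addThreeLoops u).m)} (hL : L ⊆ newLoops G u)
    (hLne : L.Nonempty) (hLS : L ⊆ S) : (L.card : ℤ) ≤ (G.addThreeLoops u).rankTerm S := by
  have hcolor {e} (he : e ∈ L) :
      (G.addThreeLoops u).color e ∈ (G.addThreeLoops u).Lambda S := by
    obtain ⟨ht, hh⟩ := newLoops_isLoop (hL he)
    have hu := tail_mem_verts (hLS he)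
    rw [ht] at hu
    exact gainGroup_le_Lambda hu (color_mem_gainGroup (hLS he) ht hh)
  have hcard : L.card ≤ 3 := card_newLoops (G := G) (u := u) ▸ Finset.card_le_card hL
  obtain ⟨e, he⟩ := hLne
  rw [rankTerm]
  rcases Finset.eq_singleton_or_nontrivial he with rfl | ⟨e₁, he₁, e₂, he₂, hne⟩
  · have := one_le_zrank (hcolor he) (color_newLoops_ne_zero (hL he))
    rw [Finset.card_singleton]
    omega
  · have := two_le_zrank (hcolor he₁) (hcolor he₂)
      (linearIndependent_color_newLoops (hL he₁) (hL he₂) hne)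
    omega

lemma exists_mem_newLoops_color_ne_zero :
    ∃ e ∈ newLoops G u, (G.addThreeLoops u).color e ≠ 0 :=
  ⟨loopEdge G u 0, Finset.mem_map_of_mem _ (Finset.mem_univ 0),
    color_newLoops_ne_zero (Finset.mem_map_of_mem _ (Finset.mem_univ 0))⟩

lemma coloredLamanSparse_addThreeLoops
    (hRoss : ∀ T : Finset (Fin G.m), (T.card : ℤ) ≤ G.rossBound T) :
    (G.addThreeLoops u).ColoredLamanSparse := by
  rw [coloredLamanSparse_iff]
  intro S _
  obtain ⟨T, L, hL, rfl⟩ := exists_eq_map_oldEdge_union S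
  have hcard : ((T.map (oldEdge G u) ∪ L).card : ℤ) = T.card + L.card := by
    rw [Finset.card_union_of_disjoint ((disjoint_map_oldEdge_newLoops T).mono_right hL),
      Finset.card_map, Nat.cast_add]
  have hT := rossBound_map_oldEdge (u := u) T ▸ hRoss T
  rcases L.eq_empty_or_nonempty with rfl | hLne
  · rw [Finset.union_empty] at hcard ⊢
    have := rankTerm_nonneg _ (T.map (oldEdge G u))
    simp only [Finset.card_empty, Nat.cast_zero, add_zero] at hcard
    linarith
  · have hmono := rossBound_le_rossBound_union_loops (S := T.map (oldEdge G u))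
      (fun e he => newLoops_isLoop (hL he))
      (let ⟨e, he⟩ := hLne; ⟨e, he, color_newLoops_ne_zero (hL he)⟩)
    have hslack :=
      card_le_rankTerm hL hLne (Finset.subset_union_right (s₁ := T.map (oldEdge G u)))
    linarith

lemma card_le_rossBound_of_trivial (hLam : (G.addThreeLoops u).ColoredLamanSparse)
    {A : Finset (Fin G.m)} (hA : ∀ v ∈ G.verts A, G.gainGroup A v = ⊥) :
    (A.card : ℤ) ≤ G.rossBound A := by
  rcases A.eq_empty_or_nonempty with rfl | hAne
  · simp [rossBound_empty]
  have hΛ : (G.addThreeLoops u).Lambda (A.map (oldEdge G u)) = ⊥ :=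
    Lambda_eq_bot fun v hv =>
      (gainGroup_map_oldEdge A v).trans (hA v (verts_map_oldEdge (u := u) A ▸ hv))
  have h := coloredLamanSparse_iff.mp hLam _ (hAne.map (f := oldEdge G u))
  rw [rankTerm, hΛ, zrank_bot, Finset.card_map, rossBound_map_oldEdge] at h
  simpa using h

lemma card_le_rossBound_of_nontrivial (hLam : (G.addThreeLoops u).ColoredLamanSparse)
    {B : Finset (Fin G.m)} (hB : u ∈ G.verts B → G.gainGroup B u ≠ ⊥) :
    (B.card : ℤ) ≤ G.rossBound B := by
  have hnt : u ∈ (G.addThreeLoops u).verts (B.map (oldEdge G u)) →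
      (G.addThreeLoops u).gainGroup (B.map (oldEdge G u)) u ≠ ⊥ := by
    rw [verts_map_oldEdge, gainGroup_map_oldEdge]
    exact hB
  obtain ⟨e, he, -⟩ := exists_mem_newLoops_color_ne_zero (G := G) (u := u)
  have h := coloredLamanSparse_iff.mp hLam (B.map (oldEdge G u) ∪ newLoops G u)
    ⟨e, by simp [he]⟩
  rw [Finset.card_union_of_disjoint (disjoint_map_oldEdge_newLoops B), Finset.card_map,
    card_newLoops, rossBound_union_loops_of_nontrivial (fun _ => newLoops_isLoop)
      exists_mem_newLoops_color_ne_zero hnt, rossBound_map_oldEdge] at h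
  have := rankTerm_le_three _ (B.map (oldEdge G u) ∪ newLoops G u)
  push_cast at h
  linarith

lemma card_le_rossBound_of_coloredLamanSparse (hLam : (G.addThreeLoops u).ColoredLamanSparse)
    (S : Finset (Fin G.m)) : (S.card : ℤ) ≤ G.rossBound S := by
  classical
  set A := S.filter fun e => G.gainGroup S (G.tail e) = ⊥
  set B := S.filter fun e => ¬ G.gainGroup S (G.tail e) = ⊥
  have hAS : A ∪ B = S := Finset.filter_union_filter_not_eq _ _
  have hAtriv : ∀ v ∈ G.verts A, G.gainGroup S v = ⊥ := fun _ =>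
    gainGroup_prop_of_mem_verts (p := (· = ⊥)) (Finset.filter_subset _ _)
      fun _ he => (Finset.mem_filter.mp he).2
  have hBnt : ∀ v ∈ G.verts B, ¬ G.gainGroup S v = ⊥ := fun _ =>
    gainGroup_prop_of_mem_verts (p := (¬ · = ⊥)) (Finset.filter_subset _ _)
      fun _ he => (Finset.mem_filter.mp he).2
  have hd : Disjoint (G.verts A) (G.verts B) :=
    Finset.disjoint_left.mpr fun v hA hB => hBnt v hB (hAtriv v hA)
  have hA := card_le_rossBound_of_trivial hLam fun v hv =>
    le_bot_iff.mp ((gainGroup_mono (Finset.filter_subset _ _) v).trans_eq (hAtriv v hv))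
  have hB := card_le_rossBound_of_nontrivial hLam fun hu => by
    rw [← gainGroup_union_of_disjoint hd.symm hu, Finset.union_comm, hAS]
    exact hBnt u hu
  calc (S.card : ℤ) = A.card + B.card := by
        rw [← Nat.cast_add, ← hAS,
          Finset.card_union_of_disjoint (Finset.disjoint_filter_filter_not _ _ _)]
    _ ≤ G.rossBound A + G.rossBound B := add_le_add hA hB
    _ = G.rossBound S := by rw [← rossBound_union_of_disjoint hd, hAS]

end AddThreeLoops

end CGraph

/-- A `ℤ²`-colored graph is a Ross graph iff, for any vertex `u`,
adding three self-loops at `u` colored `(1,0)`, `(0,1)` and `(1,1)` yields a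
colored-Laman graph. -/
theorem ross_iff_addLoops_coloredLaman (G : CGraph (ℤ × ℤ)) (u : Fin G.n) :
    G.Ross ↔ (G.addThreeLoops u).ColoredLaman := by
  have hm : ((G.addThreeLoops u).m : ℤ) = G.m + 3 := by
    show ((G.m + 3 : ℕ) : ℤ) = _
    push_cast
    rfl
  have hn : ((G.addThreeLoops u).n : ℤ) = G.n := rfl
  constructor
  · intro hRoss
    refine ⟨CGraph.coloredLamanSparse_addThreeLoops hRoss.card_le_rossBound, ?_⟩
    rw [hm, hn, hRoss.1]
    ring
  · rintro ⟨hLam, hcount⟩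
    rw [hm, hn] at hcount
    exact ⟨by linarith, fun S _ => CGraph.card_le_rossBound_of_coloredLamanSparse hLam S⟩
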